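/- arXiv:2604.06859 — 2 statements merged into one kernel-verified Lean document; each statement's English description precedes it below -/
import Mathlib

section
/- Let M = (S, Act, P) be an MDP with RelReach data (m, n, q₁,…,q_m, q, s₁,…,s_m, k, T₁,…,T_m) and a comparison relation ⋈ ∈ {>, ≥, ≈_ε, ≉_ε} for some rational ε ≥ 0. Write the state-scheduler combinations as 𝒞 = {c₁,…,c_r}. Then there exist schedulers σ₁,…,σₙ for M with Σ_{i=1}^m qᵢ · Pr^{M,σ_{k(i)}}_{sᵢ}(◇Tᵢ) ⋈ q if and only if there exist schedulers τ₁,…,τ_r for M (one per combination) with Σ_{l=1}^r Σ_{j ∈ ind(c_l)} q_j · Pr^{M,τ_l}_{s_j}(◇T_j) ⋈ q. -/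
open scoped Classical
open Filter

noncomputable section

/-- A Markov decision process with state space `S` and action space `A`. -/
structure MDP (S A : Type) where
  P : S → A → S → ℝ
  nonneg : ∀ s a s', 0 ≤ P s a s'
  le_one : ∀ s a s', P s a s' ≤ 1
  exists_enabled : ∀ s : S, ∃ a : A, (∑' s', P s a s') = 1
  zero_of_not_enabled : ∀ (s : S) (a : A), (∑' s', P s a s') ≠ 1 → (∑' s', P s a s') = 0

namespace MDP

variable {S A : Type}

/-- Action `a` is enabled in state `s`. -/
def Enabled (M : MDP S A) (s : S) (a : A) : Prop := (∑' s', M.P s a s') = 1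

/-- `s` is an absorbing state. -/
def AbsorbingState (M : MDP S A) (s : S) : Prop := ∀ a : A, M.Enabled s a → M.P s a s = 1

/-- An absorbing set of states: all its elements are absorbing. -/
def AbsorbingSet (M : MDP S A) (T : Set S) : Prop := ∀ s ∈ T, M.AbsorbingState s

end MDP

/-- A finite path: an initial state together with a list of (action, next state) steps. -/
abbrev FPath (S A : Type) : Type := S × List (A × S)

/-- The last state of a finite path. -/
def fpLast {S A : Type} (p : FPath S A) : S := ((p.2.map Prod.snd).getLast?).getD p.1

/-- Extending a finite path by one step. -/
def fpExt {S A : Type} (p : FPath S A) (a : A) (s' : S) : FPath S A := (p.1, p.2 ++ [(a, s')])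

/-- A (history-dependent, randomized) scheduler for the MDP `M`. -/
structure Scheduler {S A : Type} (M : MDP S A) where
  act : FPath S A → A → ℝ
  nonneg : ∀ p a, 0 ≤ act p a
  sum_one : ∀ p, (∑' a, act p a) = 1
  not_enabled : ∀ p a, ¬ M.Enabled (fpLast p) a → act p a = 0

namespace Scheduler

variable {S A : Type} {M : MDP S A}

/-- A memoryless scheduler depends only on the last state of the path. -/
def Memoryless (σ : Scheduler M) : Prop :=
  ∀ p : FPath S A, σ.act p = σ.act (fpLast p, ([] : List (A × S)))

/-- A deterministic scheduler chooses a Dirac distribution on every path. -/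
def Deterministic (σ : Scheduler M) : Prop := ∀ p : FPath S A, ∃ a : A, σ.act p a = 1

/-- A memoryless deterministic (MD) scheduler. -/
def MD (σ : Scheduler M) : Prop := σ.Memoryless ∧ σ.Deterministic

end Scheduler

/-- One-step expectation operator: expected value of `g` after one step from `p`. -/
def stepExp {S A : Type} (M : MDP S A) (σ : Scheduler M) (p : FPath S A)
    (g : FPath S A → ℝ) : ℝ :=
  ∑' a : A, ∑' s' : S, σ.act p a * M.P (fpLast p) a s' * g (fpExt p a s')

/-- Probability of visiting `T` within `n` further steps, continuing the finite path `p`. -/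
def reachN {S A : Type} (M : MDP S A) (σ : Scheduler M) (T : Set S) :
    ℕ → FPath S A → ℝ
  | 0, p => if fpLast p ∈ T then 1 else 0
  | n + 1, p => if fpLast p ∈ T then 1 else stepExp M σ p (reachN M σ T n)

/-- Reachability probability `Pr^{M,σ}_s(◇T)`. -/
def reachProb {S A : Type} (M : MDP S A) (σ : Scheduler M) (s : S) (T : Set S) : ℝ :=
  ⨆ n : ℕ, reachN M σ T n (s, [])

/-- Probability of visiting `T` at some time `≥ j` within `j + n` steps, from path `p`. -/
def reachAfterN {S A : Type} (M : MDP S A) (σ : Scheduler M) (T : Set S) :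
    ℕ → ℕ → FPath S A → ℝ
  | 0, n, p => reachN M σ T n p
  | j + 1, n, p => stepExp M σ p (fun p' => reachAfterN M σ T j n p')

/-- Büchi probability `Pr^{M,σ}_s(□◇T)`: the probability of visiting `T` infinitely often. -/
def buchiProb {S A : Type} (M : MDP S A) (σ : Scheduler M) (s : S) (T : Set S) : ℝ :=
  ⨅ j : ℕ, ⨆ n : ℕ, reachAfterN M σ T j n (s, [])

/-- Expected sum of the rewards of the first `n+1` states (counting the current one). -/
def expRewN {S A : Type} (M : MDP S A) (σ : Scheduler M) (R : S → ℝ) :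
    ℕ → FPath S A → ℝ
  | 0, p => R (fpLast p)
  | n + 1, p => R (fpLast p) + stepExp M σ p (fun p' => expRewN M σ R n p')

/-- Expected total reward `E^{M,σ}_s(R)`. -/
def expTotalReward {S A : Type} (M : MDP S A) (σ : Scheduler M) (R : S → ℝ) (s : S) : ℝ :=
  limUnder atTop (fun n => expRewN M σ R n (s, []))

end
/-- The comparison relations `>`, `≥`, `≈_ε`, `≉_ε` (for rational `ε ≥ 0`). -/
def IsCmp (cmp : ℝ → ℝ → Prop) : Prop :=
  cmp = (· > ·) ∨ cmp = (· ≥ ·) ∨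
    (∃ ε : ℚ, 0 ≤ ε ∧ cmp = fun x y => |x - y| ≤ (ε : ℝ)) ∨
    (∃ ε : ℚ, 0 ≤ ε ∧ cmp = fun x y => |x - y| > (ε : ℝ))

/-- The comparison relations `>`, `≥`, `≉_ε` (for rational `ε ≥ 0`). -/
def IsCmpNoEq (cmp : ℝ → ℝ → Prop) : Prop :=
  cmp = (· > ·) ∨ cmp = (· ≥ ·) ∨
    (∃ ε : ℚ, 0 ≤ ε ∧ cmp = fun x y => |x - y| > (ε : ℝ))

/-!
Reachability from `s` only depends on what a scheduler does on paths starting in `s`. Hence the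
schedulers `τ (s, j)`, `s ∈ S`, can be merged into one scheduler that reads the initial state `s` of
the path and then follows `τ (s, j)`; it realises every `Pr_{sᵢ}(◇Tᵢ)` with `k i = j` exactly as
`τ (sᵢ, j)` does. Conversely, `τ (s, j) := σ j` gives one scheduler per combination.
-/

namespace Scheduler

variable {S A : Type} {M : MDP S A}

def ofInitialState (τ : S → Scheduler M) : Scheduler M where
  act p := (τ p.1).act p
  nonneg p := (τ p.1).nonneg p
  sum_one p := (τ p.1).sum_one p
  not_enabled p := (τ p.1).not_enabled p

end Scheduler

section Congr

variable {S A : Type} {M : MDP S A} {σ σ' : Scheduler M} {s : S}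

theorem reachN_congr_of_act_eq (h : ∀ p : FPath S A, p.1 = s → σ.act p = σ'.act p)
    (T : Set S) (n : ℕ) {p : FPath S A} (hp : p.1 = s) :
    reachN M σ T n p = reachN M σ' T n p := by
  induction n generalizing p with
  | zero => rfl
  | succ n ih =>
    simp only [reachN, stepExp, h p hp]
    congr 1
    refine tsum_congr fun a => tsum_congr fun s' => ?_
    rw [ih (p := fpExt p a s') hp]

theorem reachProb_congr_of_act_eq (h : ∀ p : FPath S A, p.1 = s → σ.act p = σ'.act p)
    (T : Set S) : reachProb M σ s T = reachProb M σ' s T := by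
  simp only [reachProb]
  congr 1 with n
  exact reachN_congr_of_act_eq h T n rfl

end Congr

theorem reachProb_ofInitialState {S A : Type} {M : MDP S A} (τ : S → Scheduler M) (s : S)
    (T : Set S) : reachProb M (Scheduler.ofInitialState τ) s T = reachProb M (τ s) s T :=
  reachProb_congr_of_act_eq (fun _ hp => hp ▸ rfl) T

theorem relReach_state_scheduler_combinations_general
    {S A : Type}
    (M : MDP S A) (m n : ℕ)
    (qc : Fin m → ℚ) (q : ℚ) (st : Fin m → S)
    (k : Fin m → Fin n)
    (T : Fin m → Set S)
    (cmp : ℝ → ℝ → Prop) :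
    (∃ σ : Fin n → Scheduler M,
        cmp (∑ i : Fin m, (qc i : ℝ) * reachProb M (σ (k i)) (st i) (T i)) (q : ℝ)) ↔
    (∃ τ : S × Fin n → Scheduler M,
        cmp (∑ i : Fin m, (qc i : ℝ) * reachProb M (τ (st i, k i)) (st i) (T i)) (q : ℝ)) := by
  constructor
  · rintro ⟨σ, hσ⟩
    exact ⟨fun c => σ c.2, hσ⟩
  · rintro ⟨τ, hτ⟩
    refine ⟨fun j => Scheduler.ofInitialState fun s => τ (s, j), ?_⟩
    simpa only [reachProb_ofInitialState] using hτ

theorem relReach_state_scheduler_combinations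
    {S A : Type} [Finite S] [Nonempty S] [Finite A] [Nonempty A]
    (M : MDP S A) (m n : ℕ) (hm : 1 ≤ m)
    (qc : Fin m → ℚ) (q : ℚ) (st : Fin m → S)
    (k : Fin m → Fin n) (hk : Function.Surjective k)
    (T : Fin m → Set S)
    (cmp : ℝ → ℝ → Prop) (hcmp : IsCmp cmp) :
    (∃ σ : Fin n → Scheduler M,
        cmp (∑ i : Fin m, (qc i : ℝ) * reachProb M (σ (k i)) (st i) (T i)) (q : ℝ)) ↔
    (∃ τ : S × Fin n → Scheduler M,
        cmp (∑ i : Fin m, (qc i : ℝ) * reachProb M (τ (st i, k i)) (st i) (T i)) (q : ℝ)) :=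
  relReach_state_scheduler_combinations_general M m n qc q st k T cmp
end

section
/- Let M = (S, Act, P) be an MDP, s ∈ S, J a nonempty finite index set, (q_j)_{j∈J} rational coefficients and (T_j)_{j∈J} target sets. Let 𝒯 = {T_j | j ∈ J}, let M_𝒯 be the goal unfolding of M w.r.t. 𝒯, and let R be the reward structure on M_𝒯 given by the coefficients q_T = Σ_{j ∈ J : T_j = T} q_j (T ∈ 𝒯). Then the supremum over all schedulers σ of M of Σ_{j∈J} q_j · Pr^{M,σ}_s(◇T_j) equals the supremum over all schedulers τ of M_𝒯 of E^{M_𝒯,τ}_{(s,∅)}(R), and the analogous identity holds with infima in place of suprema. -/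
open scoped Classical
open Filter

/-- `Mu` is the goal unfolding of `M` with respect to the family `𝒯` of target sets. -/
def IsGoalUnfolding {S A : Type} (M : MDP S A) (𝒯 : Set (Set S))
    (Mu : MDP (S × Set (Set S)) A) : Prop :=
  ∀ (s : S) (U : Set (Set S)) (a : A) (s' : S) (U' : Set (Set S)),
    Mu.P (s, U) a (s', U') =
      if U' = U ∪ {T' ∈ 𝒯 | s ∈ T'} then M.P s a s' else 0

/-- The reward structure on the goal unfolding associated with coefficients `(q_T)_{T ∈ 𝒯}`:
`R(s,𝒰) = Σ_{T ∈ 𝒯 : s ∈ T, T ∉ 𝒰} q_T`. -/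
noncomputable def unfoldReward {S : Type} (𝒯 : Set (Set S)) (qT : Set S → ℚ) :
    S × Set (Set S) → ℝ :=
  fun x => ∑' T' : {T' : Set S // T' ∈ 𝒯 ∧ x.1 ∈ T' ∧ T' ∉ x.2}, (qT T'.1 : ℝ)

/-- The reward structure on the goal unfolding induced by an indexed family of targets
`(T_j)_{j ∈ J}` with coefficients `(q_j)_{j ∈ J}`, where `q_T = Σ_{j : T_j = T} q_j`:
`R(s,𝒰) = Σ_{T ∈ range T_ : s ∈ T, T ∉ 𝒰} Σ_{j : T_j = T} q_j`. -/
noncomputable def unfoldRewardIdx {S J : Type} (Tf : J → Set S) (qf : J → ℚ) :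
    S × Set (Set S) → ℝ :=
  fun x => ∑' T' : {T' : Set S // T' ∈ Set.range Tf ∧ x.1 ∈ T' ∧ T' ∉ x.2},
    ∑' j : {j : J // Tf j = T'.1}, (qf j.1 : ℝ)

/-!
Along a path of the goal unfolding started in `(s, ∅)`, the second component of each state is
the set of targets met strictly before it, so the reward `q_T` is collected exactly once, at the
first visit to `T`. Hence for schedulers `σ` of `M` and `τ` of `M_𝒯` that agree along lifted
paths, the expected total reward under `τ` is `Σ_j q_j Pr^σ(◇T_j)`. Every scheduler of `M` lifts
(read it on the projected path) and every scheduler of `M_𝒯` restricts (read it on the lifted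
path) to such a partner, so both sides range over the same set of values.
-/

section StepExp

variable {S A : Type} (M : MDP S A) (σ : Scheduler M) (p : FPath S A)

lemma stepExp_congr {g g' : FPath S A → ℝ} (h : ∀ a s', g (fpExt p a s') = g' (fpExt p a s')) :
    stepExp M σ p g = stepExp M σ p g' := by
  simp only [stepExp, h]

lemma stepExp_zero : stepExp M σ p (fun _ => 0) = 0 := by
  simp [stepExp]

lemma stepExp_one : stepExp M σ p (fun _ => 1) = 1 := by
  have h : ∀ a, ∑' s', σ.act p a * M.P (fpLast p) a s' * 1 = σ.act p a := by
    intro a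
    simp_rw [mul_one]
    rw [tsum_mul_left]
    by_cases ha : M.Enabled (fpLast p) a
    · rw [show ∑' s', M.P (fpLast p) a s' = 1 from ha, mul_one]
    · rw [σ.not_enabled p a ha, zero_mul]
  simp only [stepExp, h, σ.sum_one]

variable [Finite S] [Finite A]

lemma stepExp_mono {g g' : FPath S A → ℝ} (h : ∀ q, g q ≤ g' q) :
    stepExp M σ p g ≤ stepExp M σ p g' :=
  Summable.tsum_le_tsum (fun a => Summable.tsum_le_tsum
    (fun s' => mul_le_mul_of_nonneg_left (h _) (mul_nonneg (σ.nonneg p a) (M.nonneg _ a s')))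
    .of_finite .of_finite) .of_finite .of_finite

lemma stepExp_sum_mul {ι : Type} (t : Finset ι) (c : ι → ℝ) (g : ι → FPath S A → ℝ) :
    stepExp M σ p (fun q => ∑ i ∈ t, c i * g i q) = ∑ i ∈ t, c i * stepExp M σ p (g i) := by
  simp only [stepExp, Finset.mul_sum, ← tsum_mul_left]
  rw [← Summable.tsum_finsetSum fun _ _ => .of_finite]
  refine tsum_congr fun a => ?_
  rw [← Summable.tsum_finsetSum fun _ _ => .of_finite]
  exact tsum_congr fun s' => Finset.sum_congr rfl fun i _ => by ring

lemma expRewN_sum_mul {ι : Type} (t : Finset ι) (c : ι → ℝ) (R : ι → S → ℝ) (n : ℕ)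
    (p : FPath S A) :
    expRewN M σ (fun x => ∑ i ∈ t, c i * R i x) n p = ∑ i ∈ t, c i * expRewN M σ (R i) n p := by
  induction n generalizing p with
  | zero => rfl
  | succ n ih =>
    simp only [expRewN, ih, stepExp_sum_mul, ← Finset.sum_add_distrib, mul_add]

end StepExp

section Reach

variable {S A : Type} [Finite S] [Finite A] (M : MDP S A) (σ : Scheduler M)

lemma stepExp_nonneg (p : FPath S A) {g : FPath S A → ℝ} (hg : ∀ q, 0 ≤ g q) :
    0 ≤ stepExp M σ p g :=
  stepExp_zero M σ p ▸ stepExp_mono M σ p hg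

lemma stepExp_le_one (p : FPath S A) {g : FPath S A → ℝ} (hg : ∀ q, g q ≤ 1) :
    stepExp M σ p g ≤ 1 :=
  stepExp_one M σ p ▸ stepExp_mono M σ p hg

variable (T : Set S)

lemma reachN_nonneg : ∀ (n : ℕ) (p : FPath S A), 0 ≤ reachN M σ T n p
  | 0, p => by unfold reachN; split <;> norm_num
  | n + 1, p => by
    unfold reachN; split
    · exact zero_le_one
    · exact stepExp_nonneg M σ p (reachN_nonneg n)

lemma reachN_le_one : ∀ (n : ℕ) (p : FPath S A), reachN M σ T n p ≤ 1
  | 0, p => by unfold reachN; split <;> norm_num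
  | n + 1, p => by
    unfold reachN; split
    · exact le_rfl
    · exact stepExp_le_one M σ p (reachN_le_one n)

lemma reachN_le_succ : ∀ (n : ℕ) (p : FPath S A), reachN M σ T n p ≤ reachN M σ T (n + 1) p
  | 0, p => by
    unfold reachN; split
    · exact le_rfl
    · exact stepExp_nonneg M σ p (reachN_nonneg M σ T 0)
  | n + 1, p => by
    rw [reachN, reachN]; split
    · exact le_rfl
    · exact stepExp_mono M σ p (reachN_le_succ n)

lemma tendsto_reachN_reachProb (s : S) :
    Tendsto (fun n => reachN M σ T n (s, [])) atTop (nhds (reachProb M σ s T)) :=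
  tendsto_atTop_ciSup (monotone_nat_of_le_succ fun n => reachN_le_succ M σ T n _)
    ⟨1, by rintro _ ⟨n, rfl⟩; exact reachN_le_one M σ T n _⟩

end Reach

section Paths

variable {S A : Type}

@[elab_as_elim]
lemma FPath.fpExt_induction {motive : FPath S A → Prop} (nil : ∀ s, motive (s, []))
    (ext : ∀ p a s', motive p → motive (fpExt p a s')) (p : FPath S A) : motive p := by
  obtain ⟨s, l⟩ := p
  induction l using List.reverseRecOn with
  | nil => exact nil s
  | append_singleton l x ih => exact ext (s, l) x.1 x.2 ih

@[simp]
lemma fpLast_fpExt (p : FPath S A) (a : A) (s' : S) : fpLast (fpExt p a s') = s' := by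
  simp [fpLast, fpExt]

def unfoldStep (𝒯 : Set (Set S)) (q : FPath (S × Set (Set S)) A) (a : A) (s' : S) :
    FPath (S × Set (Set S)) A :=
  fpExt q a (s', (fpLast q).2 ∪ {T ∈ 𝒯 | (fpLast q).1 ∈ T})

def liftPath (𝒯 : Set (Set S)) (p : FPath S A) : FPath (S × Set (Set S)) A :=
  p.2.foldl (fun q x => unfoldStep 𝒯 q x.1 x.2) ((p.1, ∅), [])

-- The targets met strictly before the last state of `p`.
def visited (𝒯 : Set (Set S)) (p : FPath S A) : Set (Set S) :=
  (fpLast (liftPath 𝒯 p)).2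

def projPath (q : FPath (S × Set (Set S)) A) : FPath S A :=
  (q.1.1, q.2.map fun x => (x.1, x.2.1))

variable (𝒯 : Set (Set S))

lemma visited_nil (s : S) : visited 𝒯 ((s, []) : FPath S A) = ∅ := rfl

lemma liftPath_fpExt_eq_unfoldStep (p : FPath S A) (a : A) (s' : S) :
    liftPath 𝒯 (fpExt p a s') = unfoldStep 𝒯 (liftPath 𝒯 p) a s' := by
  simp [liftPath, fpExt]

lemma fpLast_liftPath (p : FPath S A) : fpLast (liftPath 𝒯 p) = (fpLast p, visited 𝒯 p) := by
  refine Prod.ext ?_ rfl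
  induction p using FPath.fpExt_induction with
  | nil s => rfl
  | ext p a s' _ => simp [liftPath_fpExt_eq_unfoldStep, unfoldStep]

lemma liftPath_fpExt (p : FPath S A) (a : A) (s' : S) :
    liftPath 𝒯 (fpExt p a s') =
      fpExt (liftPath 𝒯 p) a (s', visited 𝒯 p ∪ {T ∈ 𝒯 | fpLast p ∈ T}) := by
  rw [liftPath_fpExt_eq_unfoldStep, unfoldStep, fpLast_liftPath]

lemma visited_fpExt (p : FPath S A) (a : A) (s' : S) :
    visited 𝒯 (fpExt p a s') = visited 𝒯 p ∪ {T ∈ 𝒯 | fpLast p ∈ T} := by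
  rw [visited, liftPath_fpExt, fpLast_fpExt]

lemma fpLast_projPath (q : FPath (S × Set (Set S)) A) : fpLast (projPath q) = (fpLast q).1 := by
  simp only [fpLast, projPath, List.map_map, List.getLast?_map]
  cases q.2.getLast? <;> rfl

lemma projPath_liftPath (p : FPath S A) : projPath (liftPath 𝒯 p) = p := by
  induction p using FPath.fpExt_induction with
  | nil s => rfl
  | ext p a s' ih =>
    rw [liftPath_fpExt]
    simpa [projPath, fpExt, Prod.ext_iff] using ih

end Paths

section GoalUnfolding

variable {S A : Type} {M : MDP S A} {𝒯 : Set (Set S)} {Mu : MDP (S × Set (Set S)) A}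

lemma IsGoalUnfolding.tsum_P_mul (hMu : IsGoalUnfolding M 𝒯 Mu) (t : S) (U : Set (Set S))
    (a : A) (f : S × Set (Set S) → ℝ) :
    ∑' x, Mu.P (t, U) a x * f x = ∑' s', M.P t a s' * f (s', U ∪ {T ∈ 𝒯 | t ∈ T}) := by
  have hinj : Function.Injective fun s' : S => (s', U ∪ {T ∈ 𝒯 | t ∈ T}) :=
    fun _ _ h => (Prod.mk.inj h).1
  rw [← hinj.tsum_eq]
  · exact tsum_congr fun s' => by rw [hMu, if_pos rfl]
  · rintro ⟨s', U'⟩ hx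
    by_cases hU : U' = U ∪ {T ∈ 𝒯 | t ∈ T}
    · exact ⟨s', by rw [hU]⟩
    · rw [Function.mem_support, hMu, if_neg hU, zero_mul] at hx
      exact absurd rfl hx

lemma IsGoalUnfolding.enabled_iff (hMu : IsGoalUnfolding M 𝒯 Mu) (t : S) (U : Set (Set S))
    (a : A) : Mu.Enabled (t, U) a ↔ M.Enabled t a := by
  have h := hMu.tsum_P_mul t U a 1
  simp only [Pi.one_apply, mul_one] at h
  rw [MDP.Enabled, MDP.Enabled, h]

def Scheduler.toUnfolding (hMu : IsGoalUnfolding M 𝒯 Mu) (σ : Scheduler M) : Scheduler Mu where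
  act q := σ.act (projPath q)
  nonneg q := σ.nonneg _
  sum_one q := σ.sum_one _
  not_enabled q a h := σ.not_enabled _ a fun ha => h <| by
    rwa [← Prod.mk.eta (p := fpLast q), hMu.enabled_iff, ← fpLast_projPath]

def Scheduler.ofUnfolding (hMu : IsGoalUnfolding M 𝒯 Mu) (τ : Scheduler Mu) : Scheduler M where
  act p := τ.act (liftPath 𝒯 p)
  nonneg p := τ.nonneg _
  sum_one p := τ.sum_one _
  not_enabled p a h := τ.not_enabled _ a <| by rwa [fpLast_liftPath, hMu.enabled_iff]

lemma Scheduler.toUnfolding_act_liftPath (hMu : IsGoalUnfolding M 𝒯 Mu) (σ : Scheduler M)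
    (p : FPath S A) : (σ.toUnfolding hMu).act (liftPath 𝒯 p) = σ.act p :=
  congrArg σ.act (projPath_liftPath 𝒯 p)

lemma stepExp_liftPath (hMu : IsGoalUnfolding M 𝒯 Mu) {σ : Scheduler M} {τ : Scheduler Mu}
    (hστ : ∀ p, τ.act (liftPath 𝒯 p) = σ.act p) (p : FPath S A)
    (g : FPath (S × Set (Set S)) A → ℝ) :
    stepExp Mu τ (liftPath 𝒯 p) g = stepExp M σ p fun p' => g (liftPath 𝒯 p') := by
  refine tsum_congr fun a => ?_
  simp only [hστ, fpLast_liftPath, mul_assoc, tsum_mul_left, hMu.tsum_P_mul, liftPath_fpExt]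

end GoalUnfolding

noncomputable def firstVisitReward {S : Type} (T : Set S) (x : S × Set (Set S)) : ℝ :=
  if x.1 ∈ T ∧ T ∉ x.2 then 1 else 0

lemma unfoldRewardIdx_eq_sum {S J : Type} [Finite S] [Fintype J] (Tf : J → Set S) (qf : J → ℚ)
    (x : S × Set (Set S)) :
    unfoldRewardIdx Tf qf x = ∑ j, (qf j : ℝ) * firstVisitReward (Tf j) x := by
  have := Fintype.ofFinite (Set S)
  rw [unfoldRewardIdx, tsum_fintype,
    ← Finset.sum_subtype {T' | T' ∈ Set.range Tf ∧ x.1 ∈ T' ∧ T' ∉ x.2} (by simp)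
      fun T' => ∑' j : {j // Tf j = T'}, (qf j : ℝ),
    Finset.sum_filter, ← Fintype.sum_fiberwise Tf]
  refine Finset.sum_congr rfl fun T' _ => ?_
  rw [tsum_fintype]
  by_cases hT' : T' ∈ Set.range Tf
  · have hfiber : ∀ j : {j // Tf j = T'}, (qf j : ℝ) * firstVisitReward (Tf j) x =
        if x.1 ∈ T' ∧ T' ∉ x.2 then (qf j : ℝ) else 0 := by
      rintro ⟨j, rfl⟩
      simp [firstVisitReward]
    simp only [hfiber, hT', true_and]
    split_ifs <;> simp
  · have : IsEmpty {j // Tf j = T'} := ⟨fun j => hT' ⟨j, j.2⟩⟩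
    simp [hT']

section Reward

variable {S A : Type} {M : MDP S A} {𝒯 : Set (Set S)}
  {Mu : MDP (S × Set (Set S)) A} {σ : Scheduler M} {τ : Scheduler Mu}

lemma expRewN_firstVisitReward_liftPath (hMu : IsGoalUnfolding M 𝒯 Mu)
    (hστ : ∀ p, τ.act (liftPath 𝒯 p) = σ.act p) {T : Set S} (hT : T ∈ 𝒯) (n : ℕ)
    (p : FPath S A) :
    expRewN Mu τ (firstVisitReward T) n (liftPath 𝒯 p) =
      if T ∈ visited 𝒯 p then 0 else reachN M σ T n p := by
  induction n generalizing p with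
  | zero =>
    by_cases hv : T ∈ visited 𝒯 p <;>
      simp [expRewN, reachN, firstVisitReward, fpLast_liftPath, hv]
  | succ n ih =>
    rw [expRewN, stepExp_liftPath hMu hστ, fpLast_liftPath]
    simp only [ih]
    have hvisited : ∀ a s', T ∈ visited 𝒯 (fpExt p a s') ↔ T ∈ visited 𝒯 p ∨ fpLast p ∈ T := by
      simp [visited_fpExt, hT]
    by_cases hstop : T ∈ visited 𝒯 p ∨ fpLast p ∈ T
    · rw [stepExp_congr M σ p (g' := fun _ => 0) fun a s' => if_pos ((hvisited a s').2 hstop),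
        stepExp_zero, add_zero]
      rcases hstop with hv | hl
      · simp [firstVisitReward, hv]
      · by_cases hv : T ∈ visited 𝒯 p <;> simp [firstVisitReward, reachN, hl, hv]
    · obtain ⟨hv, hl⟩ := not_or.1 hstop
      rw [stepExp_congr M σ p fun a s' => if_neg (mt (hvisited a s').1 hstop)]
      simp [firstVisitReward, reachN, hv, hl]

lemma expTotalReward_unfoldRewardIdx {J : Type} [Finite S] [Finite A] [Finite J] {Tf : J → Set S}
    {qf : J → ℚ} (hMu : IsGoalUnfolding M (Set.range Tf) Mu)
    (hστ : ∀ p, τ.act (liftPath (Set.range Tf) p) = σ.act p) (s : S) :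
    expTotalReward Mu τ (unfoldRewardIdx Tf qf) (s, ∅) =
      ∑' j, (qf j : ℝ) * reachProb M σ s (Tf j) := by
  have := Fintype.ofFinite J
  have hrew : ∀ n, expRewN Mu τ (unfoldRewardIdx Tf qf) n ((s, ∅), []) =
      ∑ j, (qf j : ℝ) * reachN M σ (Tf j) n (s, []) := by
    intro n
    rw [show unfoldRewardIdx Tf qf = _ from funext (unfoldRewardIdx_eq_sum Tf qf)]
    refine (expRewN_sum_mul Mu τ _ _ _ n (liftPath (Set.range Tf) (s, []))).trans ?_
    simp only [expRewN_firstVisitReward_liftPath hMu hστ (Set.mem_range_self _), visited_nil,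
      Set.mem_empty_iff_false, if_false]
  rw [tsum_fintype, expTotalReward]
  refine Tendsto.limUnder_eq ((tendsto_finsetSum _ fun j _ => ?_).congr fun n => (hrew n).symm)
  exact (tendsto_reachN_reachProb M σ (Tf j) s).const_mul _

end Reward

theorem weighted_reach_as_expected_reward_on_goal_unfolding_general
    {S A : Type} [Finite S] [Finite A]
    {J : Type} [Finite J]
    (M : MDP S A) (s : S) (qf : J → ℚ) (Tf : J → Set S)
    (Mu : MDP (S × Set (Set S)) A)
    (hMu : IsGoalUnfolding M (Set.range Tf) Mu) :
    (⨆ σ : Scheduler M, ∑' j : J, (qf j : ℝ) * reachProb M σ s (Tf j)) =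
      (⨆ τ : Scheduler Mu,
        expTotalReward Mu τ (unfoldRewardIdx Tf qf) (s, (∅ : Set (Set S)))) ∧
    (⨅ σ : Scheduler M, ∑' j : J, (qf j : ℝ) * reachProb M σ s (Tf j)) =
      (⨅ τ : Scheduler Mu,
        expTotalReward Mu τ (unfoldRewardIdx Tf qf) (s, (∅ : Set (Set S)))) := by
  have hvalues : Set.range (fun σ : Scheduler M => ∑' j, (qf j : ℝ) * reachProb M σ s (Tf j)) =
      Set.range fun τ : Scheduler Mu => expTotalReward Mu τ (unfoldRewardIdx Tf qf) (s, ∅) := by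
    ext v
    constructor
    · rintro ⟨σ, rfl⟩
      exact ⟨σ.toUnfolding hMu,
        expTotalReward_unfoldRewardIdx hMu (σ.toUnfolding_act_liftPath hMu) s⟩
    · rintro ⟨τ, rfl⟩
      exact ⟨τ.ofUnfolding hMu, (expTotalReward_unfoldRewardIdx hMu (fun _ => rfl) s).symm⟩
  exact ⟨congrArg sSup hvalues, congrArg sInf hvalues⟩

theorem weighted_reach_as_expected_reward_on_goal_unfolding
    {S A : Type} [Finite S] [Nonempty S] [Finite A] [Nonempty A]
    {J : Type} [Finite J] [Nonempty J]
    (M : MDP S A) (s : S) (qf : J → ℚ) (Tf : J → Set S)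
    (Mu : MDP (S × Set (Set S)) A)
    (hMu : IsGoalUnfolding M (Set.range Tf) Mu) :
    (⨆ σ : Scheduler M, ∑' j : J, (qf j : ℝ) * reachProb M σ s (Tf j)) =
      (⨆ τ : Scheduler Mu,
        expTotalReward Mu τ (unfoldRewardIdx Tf qf) (s, (∅ : Set (Set S)))) ∧
    (⨅ σ : Scheduler M, ∑' j : J, (qf j : ℝ) * reachProb M σ s (Tf j)) =
      (⨅ τ : Scheduler Mu,
        expTotalReward Mu τ (unfoldRewardIdx Tf qf) (s, (∅ : Set (Set S)))) :=
  weighted_reach_as_expected_reward_on_goal_unfolding_general M s qf Tf Mu hMu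
end
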